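/- For every even n ≥ 4, the directed graph Neck(1,n) of (1,n)-necklaces under the transformation T is a single directed cycle of length n − 3. -/
import Mathlib


open scoped Classical

noncomputable section

/-- The set of `(1,n)`-necklaces `A_{n,d}^ε`, encoded by parameters `(d, ε)`: two stones
facing each other across an arc of odd length `d` with `3 ≤ d ≤ n - 1`, both carrying
vectors of the common length `ε ∈ {1, 2}`, with `ε = 1` forced when `d = 3`. -/
def neckSet (n : ℕ) : Finset (ℕ × ℕ) :=
  (Finset.range (n + 1) ×ˢ Finset.range 3).filter
    (fun p => Odd p.1 ∧ 3 ≤ p.1 ∧ p.1 ≤ n - 1 ∧ (p.2 = 1 ∨ p.2 = 2) ∧ (p.1 = 3 → p.2 = 1))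

/-- The necklace transformation `T` on `(1,n)`-necklaces in the parameter encoding:
`T A_{n,n-1}^1 = A_{n,3}^1`, `T A_{n,d}^1 = A_{n,n-d+2}^2` for `3 ≤ d ≤ n-3`, and
`T A_{n,d}^2 = A_{n,n-d+4}^1` for `5 ≤ d ≤ n-1`. -/
def neckT1 (n : ℕ) (p : ℕ × ℕ) : ℕ × ℕ :=
  if p.2 = 1 then (if p.1 = n - 1 then (3, 1) else (n - p.1 + 2, 2))
  else (n - p.1 + 4, 1)

/-- Explicit parametrization of the cycle. -/
def neckF (n i : ℕ) : ℕ × ℕ := if Even i then (i + 3, 1) else (n - i, 2)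

lemma neckF_even {n i : ℕ} (h : Even i) : neckF n i = (i + 3, 1) := if_pos h

lemma neckF_odd {n i : ℕ} (h : Odd i) : neckF n i = (n - i, 2) :=
  if_neg (by rw [Nat.not_even_iff_odd]; exact h)

lemma mem_neckSet {n d e : ℕ} :
    (d, e) ∈ neckSet n ↔ d < n + 1 ∧ e < 3 ∧ Odd d ∧ 3 ≤ d ∧ d ≤ n - 1 ∧
      (e = 1 ∨ e = 2) ∧ (d = 3 → e = 1) := by
  simp only [neckSet, Finset.mem_filter, Finset.mem_product, Finset.mem_range]
  tauto

lemma neckF_mem {n : ℕ} (hn : Even n) (h4 : 4 ≤ n) {i : ℕ} (hi : i < n - 3) :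
    neckF n i ∈ neckSet n := by
  obtain ⟨k, hk⟩ := hn
  rcases Nat.even_or_odd i with h | h
  · obtain ⟨j, hj⟩ := h
    rw [neckF_even ⟨j, hj⟩, mem_neckSet]
    exact ⟨by omega, by omega, ⟨j + 1, by omega⟩, by omega, by omega, Or.inl rfl,
      fun _ => rfl⟩
  · obtain ⟨j, hj⟩ := h
    rw [neckF_odd ⟨j, hj⟩, mem_neckSet]
    exact ⟨by omega, by omega, ⟨k - j - 1, by omega⟩, by omega, by omega, Or.inr rfl,
      by omega⟩

lemma neckF_surj {n : ℕ} (hn : Even n) (h4 : 4 ≤ n) {p : ℕ × ℕ} (hp : p ∈ neckSet n) :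
    ∃ i, i < n - 3 ∧ neckF n i = p := by
  obtain ⟨k, hk⟩ := hn
  obtain ⟨d, e⟩ := p
  rw [mem_neckSet] at hp
  obtain ⟨h1, h2, ⟨j, hj⟩, h3, h4', he, h5⟩ := hp
  rcases he with he | he
  · refine ⟨d - 3, by omega, ?_⟩
    rw [neckF_even ⟨j - 1, by omega⟩, Prod.mk.injEq]
    omega
  · have hd5 : 5 ≤ d := by omega
    refine ⟨n - d, by omega, ?_⟩
    rw [neckF_odd ⟨k - j - 1, by omega⟩, Prod.mk.injEq]
    omega

lemma neckT1_neckF {n : ℕ} (hn : Even n) (h4 : 4 ≤ n) {i : ℕ} (hi : i < n - 3) :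
    neckT1 n (neckF n i) = neckF n ((i + 1) % (n - 3)) := by
  obtain ⟨k, hk⟩ := hn
  rcases Nat.even_or_odd i with h | h
  · obtain ⟨j, hj⟩ := h
    rw [neckF_even ⟨j, hj⟩]
    by_cases hlast : i = n - 4
    · rw [show i + 1 = n - 3 by omega, Nat.mod_self, neckF_even Even.zero]
      simp [neckT1, show i + 3 = n - 1 by omega]
    · rw [Nat.mod_eq_of_lt (by omega : i + 1 < n - 3), neckF_odd ⟨j, by omega⟩]
      simp only [neckT1, Prod.mk.injEq]
      rw [if_pos trivial, if_neg (show ¬ i + 3 = n - 1 by omega)]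
      simp only [Prod.mk.injEq, and_true]
      omega
  · obtain ⟨j, hj⟩ := h
    rw [neckF_odd ⟨j, hj⟩,
      Nat.mod_eq_of_lt (by omega : i + 1 < n - 3), neckF_even ⟨j + 1, by omega⟩]
    simp only [neckT1, Prod.mk.injEq]
    norm_num
    omega

lemma neckT1_iter {n : ℕ} (hn : Even n) (h4 : 4 ≤ n) (m : ℕ) :
    ∀ i, i < n - 3 → (neckT1 n)^[m] (neckF n i) = neckF n ((i + m) % (n - 3)) := by
  induction m with
  | zero => intro i hi; simp [Nat.mod_eq_of_lt hi]
  | succ m ih =>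
    intro i hi
    rw [Function.iterate_succ_apply, neckT1_neckF hn h4 hi,
      ih _ (Nat.mod_lt _ (by omega)), Nat.mod_add_mod,
      show i + 1 + m = i + (m + 1) by omega]

lemma neckF_injOn {n : ℕ} (hn : Even n) (h4 : 4 ≤ n) :
    Set.InjOn (neckF n) (Finset.range (n - 3)) := by
  intro i hi j hj hij
  simp only [Finset.coe_range, Set.mem_Iio] at hi hj
  rcases Nat.even_or_odd i with h1 | h1 <;> rcases Nat.even_or_odd j with h2 | h2
  · rw [neckF_even h1, neckF_even h2, Prod.mk.injEq] at hij; omega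
  · rw [neckF_even h1, neckF_odd h2, Prod.mk.injEq] at hij; omega
  · rw [neckF_odd h1, neckF_even h2, Prod.mk.injEq] at hij; omega
  · rw [neckF_odd h1, neckF_odd h2, Prod.mk.injEq] at hij; omega

/-- For every even `n ≥ 4`, the directed graph `Neck(1,n)` of `(1,n)`-necklaces under the
transformation `T` is a single directed cycle of length `n - 3`: `T` maps the set of
`(1,n)`-necklaces to itself, there are exactly `n - 3` of them, `T^[n-3]` is the identity
on them, and the action is transitive. -/
theorem stmt_18 (n : ℕ) (hn : Even n) (h4 : 4 ≤ n) :
    (∀ p ∈ neckSet n, neckT1 n p ∈ neckSet n) ∧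
    (neckSet n).card = n - 3 ∧
    (∀ p ∈ neckSet n, (neckT1 n)^[n - 3] p = p) ∧
    (∀ p ∈ neckSet n, ∀ q ∈ neckSet n, ∃ m : ℕ, (neckT1 n)^[m] p = q) := by
  have hN : 0 < n - 3 := by omega
  have himg : neckSet n = (Finset.range (n - 3)).image (neckF n) := by
    ext p
    simp only [Finset.mem_image, Finset.mem_range]
    constructor
    · intro hp
      obtain ⟨i, hi, he⟩ := neckF_surj hn h4 hp
      exact ⟨i, hi, he⟩
    · rintro ⟨i, hi, rfl⟩
      exact neckF_mem hn h4 hi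
  refine ⟨?_, ?_, ?_, ?_⟩
  · intro p hp
    obtain ⟨i, hi, rfl⟩ := neckF_surj hn h4 hp
    rw [neckT1_neckF hn h4 hi]
    exact neckF_mem hn h4 (Nat.mod_lt _ hN)
  · rw [himg, Finset.card_image_of_injOn (neckF_injOn hn h4), Finset.card_range]
  · intro p hp
    obtain ⟨i, hi, rfl⟩ := neckF_surj hn h4 hp
    rw [neckT1_iter hn h4 _ i hi, Nat.add_mod_right, Nat.mod_eq_of_lt hi]
  · intro p hp q hq
    obtain ⟨i, hi, rfl⟩ := neckF_surj hn h4 hp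
    obtain ⟨j, hj, rfl⟩ := neckF_surj hn h4 hq
    refine ⟨(n - 3) - i + j, ?_⟩
    rw [neckT1_iter hn h4 _ i hi, show i + ((n - 3) - i + j) = (n - 3) + j by omega,
      Nat.add_mod_left, Nat.mod_eq_of_lt hj]
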